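/- If w, w' ∈ F(n) satisfy w' = w·c where c ∈ [A_i, A_i] for A_i the normal closure of a set {x_{i1},...,x_{il}} of generators, then for any monomial X_{j_1}⋯X_{j_k} in which each of the variables X_{i1},...,X_{il} occurs at most once in total among the j's, the coefficient of that monomial in the Magnus expansions of w and w' agree. -/

import Mathlib

/-- The ring `ℤ⟨⟨X_1,…,X_n⟩⟩` of formal power series in `n` non-commuting variables with
integer coefficients, realized as coefficient functions on words in the variables. -/
def NC (n : ℕ) : Type := List (Fin n) → ℤ

namespace NC

variable {n : ℕ}

instance : AddCommGroup (NC n) := Pi.addCommGroup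

instance : One (NC n) := ⟨fun w => if w = [] then 1 else 0⟩

/-- Convolution (Cauchy) product of non-commutative power series. -/
instance : Mul (NC n) :=
  ⟨fun f g w => ∑ k ∈ Finset.range (w.length + 1), f (w.take k) * g (w.drop k)⟩

theorem mul_apply (f g : NC n) (w : List (Fin n)) :
    (f * g) w = ∑ k ∈ Finset.range (w.length + 1), f (w.take k) * g (w.drop k) := rfl

theorem one_apply (w : List (Fin n)) : (1 : NC n) w = if w = [] then 1 else 0 := rfl

theorem zero_apply (w : List (Fin n)) : (0 : NC n) w = 0 := rfl

theorem add_apply (f g : NC n) (w : List (Fin n)) : (f + g) w = f w + g w := rfl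

protected theorem mul_assoc (f g h : NC n) : f * g * h = f * (g * h) := by
  funext w
  rw [mul_apply, mul_apply]
  calc
    ∑ j ∈ Finset.range (w.length + 1), (f * g) (w.take j) * h (w.drop j)
        = ∑ j ∈ Finset.range (w.length + 1), ∑ i ∈ Finset.range (j + 1),
            f (w.take i) * g ((w.drop i).take (j - i)) * h (w.drop j) := by
          refine Finset.sum_congr rfl ?_
          intro j hj
          simp only [Finset.mem_range] at hj
          rw [mul_apply, Finset.sum_mul]
          have hlen : (w.take j).length = j := by rw [List.length_take]; omega
          rw [hlen]
          refine Finset.sum_congr rfl ?_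
          intro i hi
          simp only [Finset.mem_range] at hi
          have h1 : (w.take j).take i = w.take i := by
            rw [List.take_take]; congr 1; omega
          have h2 : (w.take j).drop i = (w.drop i).take (j - i) := List.drop_take
          rw [h1, h2]
    _ = ∑ i ∈ Finset.range (w.length + 1), ∑ k ∈ Finset.range ((w.length - i) + 1),
            f (w.take i) * g ((w.drop i).take k) * h (w.drop (i + k)) := by
          rw [Finset.sum_sigma', Finset.sum_sigma']
          refine Finset.sum_nbij' (fun p => ⟨p.2, p.1 - p.2⟩) (fun q => ⟨q.1 + q.2, q.1⟩)
            ?_ ?_ ?_ ?_ ?_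
          · rintro ⟨j, i⟩ hp
            simp only [Finset.mem_sigma, Finset.mem_range] at hp ⊢
            omega
          · rintro ⟨i, k⟩ hq
            simp only [Finset.mem_sigma, Finset.mem_range] at hq ⊢
            omega
          · rintro ⟨j, i⟩ hp
            simp only [Finset.mem_sigma, Finset.mem_range] at hp
            have hji : i + (j - i) = j := by omega
            simp [hji]
          · rintro ⟨i, k⟩ hq
            simp only [Finset.mem_sigma, Finset.mem_range] at hq
            have hik : i + k - i = k := by omega
            simp [hik]
          · rintro ⟨j, i⟩ hp
            simp only [Finset.mem_sigma, Finset.mem_range] at hp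
            have : i + (j - i) = j := by omega
            rw [this]
    _ = ∑ i ∈ Finset.range (w.length + 1), f (w.take i) * (g * h) (w.drop i) := by
          refine Finset.sum_congr rfl ?_
          intro i hi
          simp only [Finset.mem_range] at hi
          rw [mul_apply, Finset.mul_sum]
          have hlen : (w.drop i).length = w.length - i := by rw [List.length_drop]
          rw [hlen]
          refine Finset.sum_congr rfl ?_
          intro k hk
          rw [List.drop_drop]
          ring_nf

protected theorem one_mul (f : NC n) : 1 * f = f := by
  funext w
  rw [mul_apply]
  rw [Finset.sum_eq_single 0]
  · simp [one_apply]
  · intro b hb hb0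
    rw [one_apply]
    rw [if_neg, zero_mul]
    intro hnil
    rcases List.take_eq_nil_iff.mp hnil with h | h
    · exact hb0 h
    · subst h; simp at hb; exact hb0 hb
  · intro h; simp at h

protected theorem mul_one (f : NC n) : f * 1 = f := by
  funext w
  rw [mul_apply]
  rw [Finset.sum_eq_single w.length]
  · simp [one_apply]
  · intro b hb hbne
    rw [one_apply, if_neg, mul_zero]
    intro hnil
    have := List.drop_eq_nil_iff.mp hnil
    simp at hb
    omega
  · intro h; simp at h

instance instRing : Ring (NC n) where
  __ := (inferInstance : AddCommGroup (NC n))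
  mul := (· * ·)
  one := 1
  mul_assoc := NC.mul_assoc
  one_mul := NC.one_mul
  mul_one := NC.mul_one
  left_distrib f g h := by
    funext w
    simp [mul_apply, add_apply, mul_add, Finset.sum_add_distrib]
  right_distrib f g h := by
    funext w
    simp [mul_apply, add_apply, add_mul, Finset.sum_add_distrib]
  zero_mul f := by
    funext w
    simp [mul_apply, zero_apply]
  mul_zero f := by
    funext w
    simp [mul_apply, zero_apply]

/-- The variable `X_i` as a power series. -/
def X (i : Fin n) : NC n := fun w => if w = [i] then 1 else 0

/-- The geometric series `1 - X_i + X_i² - X_i³ + ⋯`. -/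
def geom (i : Fin n) : NC n :=
  fun w => if ∀ j ∈ w, j = i then (-1) ^ w.length else 0

theorem val_inv (i : Fin n) : (1 + X i) * geom i = 1 := by
  funext w
  rw [mul_apply]
  cases w with
  | nil => simp [one_apply, add_apply, X, geom]
  | cons a t =>
    rw [one_apply, if_neg (by simp)]
    rw [Finset.sum_eq_add 0 1 (by omega)]
    · have h0 : ((a :: t).take 0) = ([] : List (Fin n)) := rfl
      have h1 : ((a :: t).take 1) = [a] := rfl
      rw [h0, h1]
      simp only [List.drop_zero, List.drop_one]
      by_cases hai : a = i
      · subst hai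
        simp only [add_apply, one_apply, X, geom]
        by_cases ht : ∀ j ∈ t, j = a
        · have hat : ∀ j ∈ (a :: t), j = a := fun j hj =>
            (List.mem_cons.mp hj).elim id (ht j)
          have ht' : ∀ j ∈ (a :: t).tail, j = a := ht
          simp only [if_pos hat, if_pos ht, if_pos ht']
          simp [pow_succ] <;> ring
        · have hat : ¬ ∀ j ∈ (a :: t), j = a := by simp [ht]
          simp [ht, hat]
      · simp only [add_apply, one_apply, X, geom]
        have h2 : ¬ ∀ j ∈ (a :: t), j = i := by
          intro hc; exact hai (hc a (by simp))
        have h3 : ¬ ([a] = [i]) := by simp [hai]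
        simp [h2, h3]
        exact fun hc => absurd hc hai
    · intro c hc ⟨hc0, hc1⟩
      simp only [Finset.mem_range, List.length_cons] at hc
      have : ((a :: t).take c) ≠ [] ∧ ((a :: t).take c) ≠ [i] := by
        constructor
        · simp [List.take_eq_nil_iff, hc0]
        · intro hcon
          have := congrArg List.length hcon
          simp [List.length_take] at this
          omega
      simp [add_apply, one_apply, X, this.1, this.2]
    · intro h; simp at h
    · intro h; simp at h

theorem inv_val (i : Fin n) : geom i * (1 + X i) = 1 := by
  funext w
  rw [mul_apply]
  rcases List.eq_nil_or_concat w with hw | ⟨t, a, hw⟩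
  · subst hw; simp [one_apply, add_apply, X, geom]
  · rw [List.concat_eq_append] at hw
    subst hw
    rw [one_apply, if_neg (by simp)]
    have hlen : (t ++ [a]).length = t.length + 1 := by simp
    rw [Finset.sum_eq_add t.length (t.length + 1) (by omega)]
    · have h1 : (t ++ [a]).take t.length = t := List.take_left
      have h2 : (t ++ [a]).drop t.length = [a] := List.drop_left
      have h3 : (t ++ [a]).take (t.length + 1) = t ++ [a] := by
        rw [List.take_of_length_le (by simp)]
      have h4 : (t ++ [a]).drop (t.length + 1) = [] := by
        rw [List.drop_of_length_le (by simp)]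
      rw [h1, h2, h3, h4]
      have e1 : ((1 : NC n) + X i) [a] = if a = i then 1 else 0 := by
        by_cases h : a = i <;> simp [add_apply, one_apply, X, h]
      have e2 : ((1 : NC n) + X i) [] = 1 := by
        simp [add_apply, one_apply, X]
      rw [e1, e2, mul_one]
      by_cases ha : a = i
      · rw [if_pos ha, mul_one]
        by_cases ht : ∀ j ∈ t, j = i
        · have hw' : ∀ j ∈ t ++ [a], j = i := by
            intro j hj
            rcases List.mem_append.mp hj with h | h
            · exact ht j h
            · simp only [List.mem_singleton] at h
              rw [h, ha]
          simp only [geom, if_pos ht, if_pos hw', hlen, pow_succ]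
          ring
        · have hw' : ¬ ∀ j ∈ t ++ [a], j = i :=
            fun hc => ht fun j hj => hc j (List.mem_append_left _ hj)
          simp only [geom, if_neg ht, if_neg hw']
          ring
      · rw [if_neg ha, mul_zero, zero_add]
        have hw' : ¬ ∀ j ∈ t ++ [a], j = i :=
          fun hc => ha (hc a (List.mem_append_right t (by simp)))
        simp only [geom, if_neg hw']
    · intro c hc ⟨hc0, hc1⟩
      simp only [Finset.mem_range, hlen] at hc
      have hne : ((t ++ [a]).drop c) ≠ [] ∧ ((t ++ [a]).drop c) ≠ [i] := by
        constructor
        · intro hcon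
          have := congrArg List.length hcon
          simp at this
          omega
        · intro hcon
          have := congrArg List.length hcon
          simp at this
          omega
      simp [add_apply, one_apply, X, hne.1, hne.2]
    · intro h
      exact absurd (by simp only [Finset.mem_range, hlen]; omega) h
    · intro h
      exact absurd (by simp only [Finset.mem_range, hlen]; omega) h

/-- `1 + X_i` as a unit of `ℤ⟨⟨X_1,…,X_n⟩⟩`, with inverse `1 - X_i + X_i² - ⋯`. -/
def magnusUnit (i : Fin n) : (NC n)ˣ where
  val := 1 + X i
  inv := geom i
  val_inv := val_inv i
  inv_val := inv_val i

end NC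

/-- The Magnus expansion `F(n) → ℤ⟨⟨X_1,…,X_n⟩⟩ˣ`, `x_i ↦ 1 + X_i`. -/
def magnus (n : ℕ) : FreeGroup (Fin n) →* (NC n)ˣ := FreeGroup.lift NC.magnusUnit

/-- The coefficient of the monomial `X_{u 0} ⋯ X_{u k}` in the Magnus expansion of `w`. -/
def magnusCoeff {n : ℕ} (w : FreeGroup (Fin n)) (u : List (Fin n)) : ℤ :=
  ((magnus n w : (NC n)ˣ) : NC n) u

/-! Grade words by their `S`-degree, the number of letters from `S` they contain. The series
vanishing on all words of `S`-degree `< d` form a two-sided ideal `I_d` of `ℤ⟨⟨X⟩⟩`, and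
`I_d * I_e ⊆ I_{d+e}`. For any two-sided ideal `I` the units `≡ 1 mod I` form a normal subgroup,
and `[a, b] - 1 = ((a - 1)(b - 1) - (b - 1)(a - 1)) a⁻¹ b⁻¹`, so commutators of units `≡ 1 mod I_1`
are `≡ 1 mod I_2`. As `x_s ↦ 1 + X_s` with `X_s ∈ I_1` for `s ∈ S`, the Magnus expansion `M` sends
`A` into `1 + I_1` and `[A, A]` into `1 + I_2`; hence `M(wc) - M(w) = M(w)(M(c) - 1) ∈ I_2`, whose
coefficients on words of `S`-degree `≤ 1` vanish. -/

namespace TwoSidedIdeal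

variable {R : Type*} [Ring R] (I : TwoSidedIdeal R)

def unitsCongrOne : Subgroup Rˣ where
  carrier := {u | (u : R) - 1 ∈ I}
  one_mem' := by simp [I.zero_mem]
  mul_mem' {a b} ha hb := by
    have h : ((a * b : Rˣ) : R) - 1 = a * ((b : R) - 1) + ((a : R) - 1) := by
      simp only [Units.val_mul, mul_sub, mul_one, sub_add_sub_cancel]
    show _ ∈ I
    rw [h]
    exact I.add_mem (I.mul_mem_left _ _ hb) ha
  inv_mem' {a} ha := by
    have h : ((a⁻¹ : Rˣ) : R) - 1 = -(((a⁻¹ : Rˣ) : R) * ((a : R) - 1)) := by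
      simp only [mul_sub, Units.inv_mul, mul_one, neg_sub]
    show _ ∈ I
    rw [h]
    exact I.neg_mem (I.mul_mem_left _ _ ha)

variable {I}

theorem mem_unitsCongrOne {u : Rˣ} : u ∈ I.unitsCongrOne ↔ (u : R) - 1 ∈ I := Iff.rfl

instance unitsCongrOne_normal : I.unitsCongrOne.Normal where
  conj_mem a ha g := by
    have h : ((g * a * g⁻¹ : Rˣ) : R) - 1 = g * ((a : R) - 1) * ((g⁻¹ : Rˣ) : R) := by
      simp only [Units.val_mul, mul_sub, sub_mul, mul_one, Units.mul_inv]
    rw [mem_unitsCongrOne, h]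
    exact I.mul_mem_right _ _ (I.mul_mem_left _ _ ha)

open scoped commutatorElement in
theorem commutatorElement_mem_unitsCongrOne {a b : Rˣ}
    (h : ((a : R) - 1) * ((b : R) - 1) - ((b : R) - 1) * ((a : R) - 1) ∈ I) :
    ⁅a, b⁆ ∈ I.unitsCongrOne := by
  have key : ((⁅a, b⁆ : Rˣ) : R) - 1 =
      (((a : R) - 1) * ((b : R) - 1) - ((b : R) - 1) * ((a : R) - 1)) *
        ((a⁻¹ : Rˣ) : R) * ((b⁻¹ : Rˣ) : R) := by
    calc ((⁅a, b⁆ : Rˣ) : R) - 1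
        = a * b * ((a⁻¹ : Rˣ) : R) * ((b⁻¹ : Rˣ) : R) -
            b * (a * ((a⁻¹ : Rˣ) : R)) * ((b⁻¹ : Rˣ) : R) := by
          simp only [commutatorElement_def, Units.val_mul, Units.mul_inv, mul_one]
      _ = _ := by noncomm_ring
  rw [mem_unitsCongrOne, key]
  exact I.mul_mem_right _ _ (I.mul_mem_right _ _ h)

end TwoSidedIdeal

theorem Subgroup.commutator_comap_le {G G' : Type*} [Group G] [Group G'] (f : G →* G')
    (H K : Subgroup G') : ⁅H.comap f, K.comap f⁆ ≤ ⁅H, K⁆.comap f := by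
  rw [← Subgroup.map_le_iff_le_comap, Subgroup.map_commutator]
  exact Subgroup.commutator_mono (Subgroup.map_comap_le _ _) (Subgroup.map_comap_le _ _)

namespace NC

variable {n : ℕ} (S : Finset (Fin n))

theorem mul_apply_eq_zero_of_countP_lt {f g : NC n} {d e : ℕ}
    (hf : ∀ v, v.countP (· ∈ S) < d → f v = 0) (hg : ∀ v, v.countP (· ∈ S) < e → g v = 0)
    {v : List (Fin n)} (hv : v.countP (· ∈ S) < d + e) : (f * g) v = 0 := by
  rw [mul_apply]
  refine Finset.sum_eq_zero fun k _ => ?_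
  have hsplit : (v.take k).countP (· ∈ S) + (v.drop k).countP (· ∈ S) = v.countP (· ∈ S) := by
    rw [← List.countP_append, List.take_append_drop]
  by_cases hk : (v.take k).countP (· ∈ S) < d
  · rw [hf _ hk, zero_mul]
  · rw [hg _ (by omega), mul_zero]

def degIdeal (d : ℕ) : TwoSidedIdeal (NC n) :=
  .mk' {f : NC n | ∀ v : List (Fin n), v.countP (· ∈ S) < d → f v = 0}
    (fun _ _ => rfl)
    (fun hf hg v hv => by rw [add_apply, hf v hv, hg v hv, add_zero])
    (fun hf v hv => neg_eq_zero.2 (hf v hv))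
    (fun hg _ hv => mul_apply_eq_zero_of_countP_lt S (d := 0) (e := d) (by simp) hg (by omega))
    (fun hf _ hv => mul_apply_eq_zero_of_countP_lt S (d := d) (e := 0) hf (by simp) hv)

variable {S}

theorem mem_degIdeal {d : ℕ} {f : NC n} :
    f ∈ degIdeal S d ↔ ∀ v, v.countP (· ∈ S) < d → f v = 0 :=
  TwoSidedIdeal.mem_mk' ..

theorem mul_mem_degIdeal {d e : ℕ} {f g : NC n} (hf : f ∈ degIdeal S d) (hg : g ∈ degIdeal S e) :
    f * g ∈ degIdeal S (d + e) :=
  mem_degIdeal.2 fun _ => mul_apply_eq_zero_of_countP_lt S (mem_degIdeal.1 hf) (mem_degIdeal.1 hg)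

theorem X_mem_degIdeal_one {s : Fin n} (hs : s ∈ S) : X s ∈ degIdeal S 1 := by
  refine mem_degIdeal.2 fun v hv => if_neg ?_
  rintro rfl
  simp [hs] at hv

open scoped commutatorElement in
theorem commutator_unitsCongrOne_degIdeal_le (d e : ℕ) :
    ⁅(degIdeal S d).unitsCongrOne, (degIdeal S e).unitsCongrOne⁆ ≤
      (degIdeal S (d + e)).unitsCongrOne := by
  refine Subgroup.commutator_le.2 fun a ha b hb => ?_
  refine TwoSidedIdeal.commutatorElement_mem_unitsCongrOne (TwoSidedIdeal.sub_mem _ ?_ ?_)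
  · exact mul_mem_degIdeal ha hb
  · exact add_comm d e ▸ mul_mem_degIdeal hb ha

end NC

theorem magnus_of_sub_one {n : ℕ} (s : Fin n) :
    ((magnus n (FreeGroup.of s) : (NC n)ˣ) : NC n) - 1 = NC.X s := by
  rw [magnus, FreeGroup.lift_apply_of]
  exact add_sub_cancel_left 1 (NC.X s)

theorem normalClosure_le_comap_magnus {n : ℕ} (S : Finset (Fin n)) :
    Subgroup.normalClosure (FreeGroup.of '' (S : Set (Fin n))) ≤
      (NC.degIdeal S 1).unitsCongrOne.comap (magnus n) := by
  refine Subgroup.normalClosure_le_normal ?_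
  rintro - ⟨s, hs, rfl⟩
  rw [SetLike.mem_coe, Subgroup.mem_comap, TwoSidedIdeal.mem_unitsCongrOne, magnus_of_sub_one]
  exact NC.X_mem_degIdeal_one hs

/-- If `w' = w·c` with `c ∈ [A,A]`, where `A` is the normal closure of the generators
`{x_s : s ∈ S}`, then for any monomial `X_{j_1}⋯X_{j_k}` in which the variables `X_s`
(`s ∈ S`) occur at most once in total, the coefficients of that monomial in the Magnus
expansions of `w` and `w'` agree. -/
theorem magnusCoeff_mul_commutator (n : ℕ) (S : Finset (Fin n))
    (w w' c : FreeGroup (Fin n))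
    (hc : c ∈ ⁅Subgroup.normalClosure (FreeGroup.of '' (S : Set (Fin n))),
               Subgroup.normalClosure (FreeGroup.of '' (S : Set (Fin n)))⁆)
    (hw' : w' = w * c)
    (u : List (Fin n)) (hu : u.countP (fun j => decide (j ∈ S)) ≤ 1) :
    magnusCoeff w' u = magnusCoeff w u := by
  have hle : ⁅Subgroup.normalClosure (FreeGroup.of '' (S : Set (Fin n))),
      Subgroup.normalClosure (FreeGroup.of '' (S : Set (Fin n)))⁆ ≤
        (NC.degIdeal S 2).unitsCongrOne.comap (magnus n) :=
    calc _ ≤ ⁅(NC.degIdeal S 1).unitsCongrOne.comap (magnus n),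
            (NC.degIdeal S 1).unitsCongrOne.comap (magnus n)⁆ :=
          Subgroup.commutator_mono (normalClosure_le_comap_magnus S)
            (normalClosure_le_comap_magnus S)
      _ ≤ _ := Subgroup.commutator_comap_le _ _ _
      _ ≤ _ := Subgroup.comap_mono (NC.commutator_unitsCongrOne_degIdeal_le 1 1)
  have hc₂ : ((magnus n c : (NC n)ˣ) : NC n) - 1 ∈ NC.degIdeal S 2 := hle hc
  have h := NC.mem_degIdeal.1 ((NC.degIdeal S 2).mul_mem_left (magnus n w) _ hc₂) u (by omega)
  rw [mul_sub, mul_one, ← Units.val_mul, ← map_mul, ← hw'] at h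
  exact sub_eq_zero.1 h
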